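/- For every c ∈ X* one has sup(RLID¹_c) ≤ sup(RLID⁴_c) ≤ sup(RLID⁷_c) and sup(RLID¹_c) ≤ sup(RLID⁵_c) ≤ sup(RLID⁷_c), where all suprema and infima are taken in [−∞,+∞]. -/

import Mathlib

/-!
A feasible point `(λ, v)` of (RLID¹_c), i.e. `c = -λ v¹`, makes the Lagrangian
`⟨c + λ v¹, x⟩ - λ v²` constant in `x`, equal to `-λ v²`. Hence `-λ v²` is a lower bound
for the value of (RLID⁴_c) at `(λ, t)` whenever `v ∈ 𝒰_t`, and for that of (RLID⁵_c) at `(λ, u)`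
for any selection `u ∈ 𝒰` with `u_t = v`. The comparisons with (RLID⁷_c) hold pointwise in `λ`
and `x`, because the inner suprema of (RLID⁴_c) and (RLID⁵_c) range over parts of `𝒱`.
-/

open Pointwise

variable {X : Type*} [AddCommGroup X] [Module ℝ X] [TopologicalSpace X]
  [IsTopologicalAddGroup X] [ContinuousSMul ℝ X] [LocallyConvexSpace ℝ X] [T2Space X]
  {T : Type*}

/-- The value of the robust dual problem (RLID¹_c). -/
noncomputable def supRLID1 (U : T → Set (WeakDual ℝ X × ℝ)) (c : WeakDual ℝ X) : EReal :=
  sSup {y : EReal | ∃ v ∈ ⋃ t, U t, ∃ l : ℝ, 0 ≤ l ∧ c = -(l • v.1) ∧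
    y = ((-(l * v.2) : ℝ) : EReal)}

/-- The value of the robust dual problem (RLID⁴_c). -/
noncomputable def supRLID4 (U : T → Set (WeakDual ℝ X × ℝ)) (c : WeakDual ℝ X) : EReal :=
  ⨆ l : {l : ℝ // 0 ≤ l}, ⨆ t : T, ⨅ x : X, ⨆ v : U t,
    (((c x + l.1 * ((v : WeakDual ℝ X × ℝ).1 x) - l.1 * (v : WeakDual ℝ X × ℝ).2) : ℝ) : EReal)

/-- The value of the robust dual problem (RLID⁵_c). -/
noncomputable def supRLID5 (U : T → Set (WeakDual ℝ X × ℝ)) (c : WeakDual ℝ X) : EReal :=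
  ⨆ l : {l : ℝ // 0 ≤ l}, ⨆ u : {u : T → WeakDual ℝ X × ℝ // ∀ s, u s ∈ U s},
    ⨅ x : X, ⨆ t : T,
      (((c x + l.1 * ((u.1 t).1 x) - l.1 * (u.1 t).2) : ℝ) : EReal)

/-- The value of the robust dual problem (RLID⁷_c). -/
noncomputable def supRLID7 (U : T → Set (WeakDual ℝ X × ℝ)) (c : WeakDual ℝ X) : EReal :=
  ⨆ l : {l : ℝ // 0 ≤ l}, ⨅ x : X, ⨆ v : (⋃ t, U t : Set (WeakDual ℝ X × ℝ)),
    (((c x + l.1 * ((v : WeakDual ℝ X × ℝ).1 x) - l.1 * (v : WeakDual ℝ X × ℝ).2) : ℝ) : EReal)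

open Set

theorem exists_forall_mem_apply_eq {ι α : Type*} {S : ι → Set α} (hS : ∀ i, (S i).Nonempty)
    {i : ι} {a : α} (ha : a ∈ S i) : ∃ u : ι → α, (∀ j, u j ∈ S j) ∧ u i = a := by
  classical
  refine ⟨Function.update (fun j => (hS j).some) i a, fun j => ?_, Function.update_self ..⟩
  rcases eq_or_ne j i with rfl | hj
  · simpa using ha
  · simpa [Function.update_of_ne hj] using (hS j).some_mem

section

variable {E : Type*} [AddCommGroup E] [Module ℝ E] [TopologicalSpace E]

theorem lagrangian_eq_of_eq_neg_smul {c : WeakDual ℝ E} {v : WeakDual ℝ E × ℝ} {l : ℝ}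
    (hc : c = -(l • v.1)) (x : E) : c x + l * v.1 x - l * v.2 = -(l * v.2) := by
  rw [show c x = -(l * v.1 x) by rw [hc]; rfl]
  ring

theorem supRLID1_le_supRLID4 (U : T → Set (WeakDual ℝ E × ℝ)) (c : WeakDual ℝ E) :
    supRLID1 U c ≤ supRLID4 U c := by
  refine sSup_le ?_
  rintro _ ⟨v, hv, l, hl, hc, rfl⟩
  obtain ⟨t, hvt⟩ := mem_iUnion.mp hv
  refine le_iSup_of_le ⟨l, hl⟩ (le_iSup_of_le t (le_iInf fun x => le_iSup_of_le ⟨v, hvt⟩ ?_))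
  exact (congrArg _ (lagrangian_eq_of_eq_neg_smul hc x)).ge

theorem supRLID1_le_supRLID5 (U : T → Set (WeakDual ℝ E × ℝ)) (hU : ∀ t, (U t).Nonempty)
    (c : WeakDual ℝ E) : supRLID1 U c ≤ supRLID5 U c := by
  refine sSup_le ?_
  rintro _ ⟨v, hv, l, hl, hc, rfl⟩
  obtain ⟨t, hvt⟩ := mem_iUnion.mp hv
  obtain ⟨u, hu, rfl⟩ := exists_forall_mem_apply_eq hU hvt
  refine le_iSup_of_le ⟨l, hl⟩ (le_iSup_of_le ⟨u, hu⟩ (le_iInf fun x => le_iSup_of_le t ?_))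
  exact (congrArg _ (lagrangian_eq_of_eq_neg_smul hc x)).ge

theorem supRLID4_le_supRLID7 (U : T → Set (WeakDual ℝ E × ℝ)) (c : WeakDual ℝ E) :
    supRLID4 U c ≤ supRLID7 U c :=
  iSup_le fun l => iSup_le fun t => le_iSup_of_le l <| iInf_mono fun _ =>
    iSup_mono' fun v => ⟨⟨v, mem_iUnion_of_mem t v.2⟩, le_rfl⟩

theorem supRLID5_le_supRLID7 (U : T → Set (WeakDual ℝ E × ℝ)) (c : WeakDual ℝ E) :
    supRLID5 U c ≤ supRLID7 U c :=
  iSup_le fun l => iSup_le fun u => le_iSup_of_le l <| iInf_mono fun _ =>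
    iSup_mono' fun t => ⟨⟨u.1 t, mem_iUnion_of_mem t (u.2 t)⟩, le_rfl⟩

end

theorem stmt9 (U : T → Set (WeakDual ℝ X × ℝ)) (hU : ∀ t, (U t).Nonempty)
    (c : WeakDual ℝ X) :
    supRLID1 U c ≤ supRLID4 U c ∧ supRLID1 U c ≤ supRLID5 U c ∧
      supRLID4 U c ≤ supRLID7 U c ∧ supRLID5 U c ≤ supRLID7 U c :=
  ⟨supRLID1_le_supRLID4 U c, supRLID1_le_supRLID5 U hU c, supRLID4_le_supRLID7 U c,
    supRLID5_le_supRLID7 U c⟩
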